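/- Let (z_k)_{k≥1} be integers with |z_k| < a_k for all k, and suppose z_ℓ ≠ 0 where ℓ is the least index with z_ℓ ≠ 0. Then the series ∑_{k=ℓ}^∞ z_k ζ_k converges absolutely and |∑_{k=ℓ}^∞ z_k ζ_k| ≥ ζ_ℓ − ∑_{k=ℓ+1}^∞ (a_k − 1) ζ_k > 0, where ζ_j = |q_j α − p_j|. -/

import Mathlib

/-!
Let `x_k` be the orbit of `fract α` under the Gauss map, so that `a_{k+1} = ⌊1 / x_k⌋`. The
signed errors `T_k = (-1)^(k+1) (q_k α - p_k)` satisfy `T_0 = 1` and `T_{k+1} = x_k T_k`; for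
irrational `α` every `x_k` lies in `(0, 1)`, so `T_k > 0`, hence `T_k = ζ_k`, and the recurrence
for `p, q` becomes `ζ_k = a_{k+1} ζ_{k+1} + ζ_{k+2}` with `a_{k+1} ≥ 1`.

From this recurrence alone, `∑ ζ_k` converges and telescoping gives
`ζ_ℓ - ∑_{k > ℓ} (a_k - 1) ζ_k = ∑_{k ≥ ℓ + 2} ζ_k > 0`. The lower bound is then the triangle
inequality: `|z_ℓ| ζ_ℓ ≥ ζ_ℓ`, while `|z_k| ζ_k ≤ (a_k - 1) ζ_k` for `k > ℓ`.
-/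

open scoped BigOperators

/-- The Gauss map `G(x) = 1/x - ⌊1/x⌋`. -/
noncomputable def gaussMap (x : ℝ) : ℝ := Int.fract (1 / x)

/-- The partial quotients of the continued fraction of `α`:
`a 0 = ⌊α⌋` and `a k = ⌊1 / G^[k-1] (fract α)⌋` for `k ≥ 1`. -/
noncomputable def cfA (α : ℝ) : ℕ → ℤ
  | 0 => ⌊α⌋
  | k + 1 => ⌊1 / (gaussMap^[k] (Int.fract α))⌋

/-- Numerators of the convergents: `p 0 = 1`, `p 1 = a 0`,
`p k = a (k-1) * p (k-1) + p (k-2)`. -/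
noncomputable def cfP (α : ℝ) : ℕ → ℤ
  | 0 => 1
  | 1 => cfA α 0
  | k + 2 => cfA α (k + 1) * cfP α (k + 1) + cfP α k

/-- Denominators of the convergents: `q 0 = 0`, `q 1 = 1`,
`q k = a (k-1) * q (k-1) + q (k-2)`. -/
noncomputable def cfQ (α : ℝ) : ℕ → ℤ
  | 0 => 0
  | 1 => 1
  | k + 2 => cfA α (k + 1) * cfQ α (k + 1) + cfQ α k

/-- `ζ k = |q k * α - p k|`. -/
noncomputable def cfZeta (α : ℝ) (k : ℕ) : ℝ := |(cfQ α k : ℝ) * α - (cfP α k : ℝ)|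

/-- `ε k = |α - p k / q k|`. -/
noncomputable def cfEps (α : ℝ) (k : ℕ) : ℝ := |α - (cfP α k : ℝ) / (cfQ α k : ℝ)|

theorem Irrational.fract_pos {x : ℝ} (hx : Irrational x) : 0 < Int.fract x :=
  Int.fract_pos.mpr (hx.ne_int _)

theorem Irrational.gaussMap {x : ℝ} (hx : Irrational x) : Irrational (gaussMap x) := by
  rw [_root_.gaussMap, one_div, ← Int.self_sub_floor]
  exact hx.inv.sub_intCast _

noncomputable def cfFrac (α : ℝ) (k : ℕ) : ℝ := gaussMap^[k] (Int.fract α)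

theorem cfFrac_succ (α : ℝ) (k : ℕ) : cfFrac α (k + 1) = Int.fract (1 / cfFrac α k) := by
  simp only [cfFrac, Function.iterate_succ_apply', gaussMap]

theorem cfFrac_lt_one (α : ℝ) : ∀ k, cfFrac α k < 1
  | 0 => Int.fract_lt_one α
  | k + 1 => by rw [cfFrac_succ]; exact Int.fract_lt_one _

theorem cfA_succ (α : ℝ) (k : ℕ) : cfA α (k + 1) = ⌊1 / cfFrac α k⌋ := rfl

noncomputable def cfSignedZeta (α : ℝ) (k : ℕ) : ℝ :=
  (-1) ^ (k + 1) * ((cfQ α k : ℝ) * α - (cfP α k : ℝ))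

theorem cfSignedZeta_zero (α : ℝ) : cfSignedZeta α 0 = 1 := by
  simp [cfSignedZeta, cfQ, cfP]

theorem cfSignedZeta_one (α : ℝ) : cfSignedZeta α 1 = cfFrac α 0 := by
  simp only [cfSignedZeta, cfQ, cfP, cfA, cfFrac, Function.iterate_zero_apply, Int.fract]
  push_cast
  ring

theorem cfSignedZeta_add_two (α : ℝ) (k : ℕ) :
    cfSignedZeta α (k + 2) = cfSignedZeta α k - cfA α (k + 1) * cfSignedZeta α (k + 1) := by
  simp only [cfSignedZeta, cfP, cfQ]
  push_cast
  ring

section Irrational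

variable {α : ℝ}

theorem irrational_cfFrac (hα : Irrational α) : ∀ k, Irrational (cfFrac α k)
  | 0 => by rw [cfFrac, Function.iterate_zero_apply, ← Int.self_sub_floor]; exact hα.sub_intCast _
  | k + 1 => by rw [cfFrac, Function.iterate_succ_apply']; exact (irrational_cfFrac hα k).gaussMap

theorem cfFrac_pos (hα : Irrational α) (k : ℕ) : 0 < cfFrac α k := by
  cases k with
  | zero => exact hα.fract_pos
  | succ k => rw [cfFrac_succ, one_div]; exact (irrational_cfFrac hα k).inv.fract_pos

theorem one_le_cfA_succ (hα : Irrational α) (k : ℕ) : 1 ≤ cfA α (k + 1) := by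
  rw [cfA_succ, Int.le_floor, Int.cast_one]
  exact one_le_one_div (cfFrac_pos hα k) (cfFrac_lt_one α k).le

theorem cfSignedZeta_succ (hα : Irrational α) :
    ∀ k, cfSignedZeta α (k + 1) = cfFrac α k * cfSignedZeta α k
  | 0 => by rw [cfSignedZeta_zero, cfSignedZeta_one, mul_one]
  | k + 1 => by
    have hx := (cfFrac_pos hα k).ne'
    rw [cfSignedZeta_add_two, cfSignedZeta_succ hα k, cfFrac_succ, cfA_succ, Int.fract]
    field_simp

theorem cfSignedZeta_pos (hα : Irrational α) : ∀ k, 0 < cfSignedZeta α k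
  | 0 => by rw [cfSignedZeta_zero]; exact one_pos
  | k + 1 => by
    rw [cfSignedZeta_succ hα]; exact mul_pos (cfFrac_pos hα k) (cfSignedZeta_pos hα k)

theorem cfZeta_eq_cfSignedZeta (hα : Irrational α) (k : ℕ) : cfZeta α k = cfSignedZeta α k := by
  rw [← abs_of_pos (cfSignedZeta_pos hα k), cfSignedZeta, abs_mul, abs_pow, abs_neg, abs_one,
    one_pow, one_mul, cfZeta]

theorem cfZeta_pos (hα : Irrational α) (k : ℕ) : 0 < cfZeta α k := by
  rw [cfZeta_eq_cfSignedZeta hα]; exact cfSignedZeta_pos hα k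

theorem cfZeta_eq_add (hα : Irrational α) (k : ℕ) :
    cfZeta α k = cfA α (k + 1) * cfZeta α (k + 1) + cfZeta α (k + 2) := by
  simp only [cfZeta_eq_cfSignedZeta hα, cfSignedZeta_add_two]
  ring

end Irrational

section ThreeTermRecurrence

variable {ζ a : ℕ → ℝ}

/-- Since `a ≥ 1`, `ζ (k + 2) ≤ ζ k - ζ (k + 1)`, so the partial sums telescope to at most `ζ 0`. -/
theorem summable_of_three_term_recurrence
    (hrec : ∀ k, ζ k = a (k + 1) * ζ (k + 1) + ζ (k + 2)) (hpos : ∀ k, 0 ≤ ζ k)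
    (ha : ∀ k, 1 ≤ a (k + 1)) : Summable ζ := by
  refine (summable_nat_add_iff 2).mp
    (summable_of_sum_range_le (c := ζ 0) (fun n => hpos _) fun n => ?_)
  calc ∑ i ∈ Finset.range n, ζ (i + 2)
      ≤ ∑ i ∈ Finset.range n, (ζ i - ζ (i + 1)) := by
        refine Finset.sum_le_sum fun k _ => ?_
        nlinarith [hrec k, ha k, hpos (k + 1)]
    _ = ζ 0 - ζ n := Finset.sum_range_sub' ζ n
    _ ≤ ζ 0 := sub_le_self _ (hpos n)

theorem hasSum_sub_one_mul_of_three_term_recurrence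
    (hrec : ∀ k, ζ k = a (k + 1) * ζ (k + 1) + ζ (k + 2)) (hs : Summable ζ) (l : ℕ) :
    HasSum (fun i => (a (l + 1 + i) - 1) * ζ (l + 1 + i)) (ζ l - ∑' i, ζ (l + 2 + i)) := by
  have htail (m : ℕ) : Summable fun i => ζ (m + i) :=
    hs.comp_injective (add_right_injective m)
  have hhead : ∑' i, ζ (l + i) = ζ l + ∑' i, ζ (l + 1 + i) := by
    rw [(htail l).tsum_eq_zero_add, add_zero]
    simp only [add_assoc, add_comm 1]
  have hterm : (fun i => (a (l + 1 + i) - 1) * ζ (l + 1 + i))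
      = fun i => ζ (l + i) - ζ (l + 1 + i) - ζ (l + 2 + i) := funext fun i => by
    rw [hrec (l + i), show l + i + 1 = l + 1 + i by ring, show l + i + 2 = l + 2 + i by ring]
    ring
  rw [hterm, show ζ l - ∑' i, ζ (l + 2 + i)
      = ∑' i, ζ (l + i) - ∑' i, ζ (l + 1 + i) - ∑' i, ζ (l + 2 + i) by rw [hhead]; ring]
  exact ((htail l).hasSum.sub (htail (l + 1)).hasSum).sub (htail (l + 2)).hasSum

end ThreeTermRecurrence

section TailBound

variable {E : Type*} [NormedAddCommGroup E] {f : ℕ → E} {g : ℕ → ℝ}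

theorem summable_norm_of_norm_succ_le (hg : Summable g) (hfg : ∀ i, ‖f (i + 1)‖ ≤ g i) :
    Summable fun i => ‖f i‖ :=
  (summable_nat_add_iff 1).mp (hg.of_nonneg_of_le (fun _ => norm_nonneg _) hfg)

theorem norm_head_sub_tsum_le_norm_tsum [CompleteSpace E] (hg : Summable g)
    (hfg : ∀ i, ‖f (i + 1)‖ ≤ g i) : ‖f 0‖ - ∑' i, g i ≤ ‖∑' i, f i‖ := by
  have htail : ‖∑' i, f (i + 1)‖ ≤ ∑' i, g i :=
    tsum_of_norm_bounded (f := fun i => f (i + 1)) hg.hasSum hfg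
  rw [(summable_norm_of_norm_succ_le hg hfg).of_norm.tsum_eq_zero_add]
  linarith [norm_sub_le_norm_add (f 0) (∑' i, f (i + 1))]

end TailBound

theorem lower_bound_general (α : ℝ) (hα : Irrational α) (z : ℕ → ℤ)
    (hz : ∀ k, 1 ≤ k → |z k| < cfA α k)
    (l : ℕ) (hzl : z l ≠ 0) :
    Summable (fun i : ℕ => |(z (l + i) : ℝ) * cfZeta α (l + i)|) ∧
    Summable (fun i : ℕ => ((cfA α (l + 1 + i) : ℝ) - 1) * cfZeta α (l + 1 + i)) ∧
    |∑' i : ℕ, (z (l + i) : ℝ) * cfZeta α (l + i)|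
      ≥ cfZeta α l - ∑' i : ℕ, ((cfA α (l + 1 + i) : ℝ) - 1) * cfZeta α (l + 1 + i) ∧
    0 < cfZeta α l - ∑' i : ℕ, ((cfA α (l + 1 + i) : ℝ) - 1) * cfZeta α (l + 1 + i) := by
  have hζ := cfZeta_pos hα
  have hrec := cfZeta_eq_add hα
  have hsummable : Summable (cfZeta α) :=
    summable_of_three_term_recurrence (a := fun k => (cfA α k : ℝ)) hrec (fun k => (hζ k).le)
      fun k => by exact_mod_cast one_le_cfA_succ hα k
  have hsum :=
    hasSum_sub_one_mul_of_three_term_recurrence (a := fun k => (cfA α k : ℝ)) hrec hsummable l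
  have hbound (i : ℕ) : ‖(z (l + (i + 1)) : ℝ) * cfZeta α (l + (i + 1))‖
      ≤ ((cfA α (l + 1 + i) : ℝ) - 1) * cfZeta α (l + 1 + i) := by
    rw [← add_assoc, add_right_comm, Real.norm_eq_abs, abs_mul, abs_of_pos (hζ _)]
    exact mul_le_mul_of_nonneg_right (by exact_mod_cast Int.le_sub_one_of_lt (hz _ (by omega)))
      (hζ _).le
  have hhead : cfZeta α l ≤ |(z l : ℝ) * cfZeta α l| := by
    rw [abs_mul, abs_of_pos (hζ l)]
    exact le_mul_of_one_le_left (hζ l).le (by exact_mod_cast Int.one_le_abs hzl)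
  refine ⟨summable_norm_of_norm_succ_le (f := fun i => (z (l + i) : ℝ) * cfZeta α (l + i))
    hsum.summable hbound, hsum.summable, ?_, ?_⟩
  · have := norm_head_sub_tsum_le_norm_tsum (f := fun i => (z (l + i) : ℝ) * cfZeta α (l + i))
      hsum.summable hbound
    simp only [add_zero, Real.norm_eq_abs] at this
    linarith
  · rw [hsum.tsum_eq, sub_sub_cancel]
    exact (hsummable.comp_injective (add_right_injective (l + 2))).tsum_pos (fun i => (hζ _).le) 0
      (hζ _)

/-- If the integers `z k` (for `k ≥ 1`) satisfy `|z k| < a k`, and `ℓ` is the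
least index with `z ℓ ≠ 0`, then `∑_{k=ℓ}^∞ z k ζ k` converges absolutely and
`|∑_{k=ℓ}^∞ z k ζ k| ≥ ζ ℓ - ∑_{k=ℓ+1}^∞ (a k - 1) ζ k > 0`. -/
theorem lower_bound (α : ℝ) (hα : Irrational α) (z : ℕ → ℤ)
    (hz : ∀ k, 1 ≤ k → |z k| < cfA α k)
    (l : ℕ) (hl : 1 ≤ l) (hzl : z l ≠ 0) (hmin : ∀ k, 1 ≤ k → k < l → z k = 0) :
    Summable (fun i : ℕ => |(z (l + i) : ℝ) * cfZeta α (l + i)|) ∧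
    Summable (fun i : ℕ => ((cfA α (l + 1 + i) : ℝ) - 1) * cfZeta α (l + 1 + i)) ∧
    |∑' i : ℕ, (z (l + i) : ℝ) * cfZeta α (l + i)|
      ≥ cfZeta α l - ∑' i : ℕ, ((cfA α (l + 1 + i) : ℝ) - 1) * cfZeta α (l + 1 + i) ∧
    0 < cfZeta α l - ∑' i : ℕ, ((cfA α (l + 1 + i) : ℝ) - 1) * cfZeta α (l + 1 + i) :=
  lower_bound_general α hα z hz l hzl
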